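/- ρ = 0 if and only if μ_{F,X} = μ_F almost surely; in particular, if X and Y are independent, then ρ = 0. -/

import Mathlib

open MeasureTheory ProbabilityTheory Bornology Filter

/-!
Disintegrating the law of `(X, Y)` along `κ` gives `E[V(X)] = ∫ V dP_X ≤ ∫ W dP_X = V_F`, where
`W x = ∫ d²(y, μ_F) κ(x)(dy)`, because `μ_{F,x}` minimises the conditional Fréchet function.
Equality of two integrals of ordered integrable functions forces `V = W` a.e., and uniqueness of
the conditional minimiser turns this into `μ_{F,x} = μ_F` a.e. Under independence `κ` may be taken
constant equal to `P_Y`, so `E[V(X)] = E[d²(Y, μ_{F,X})] = ∫ E[d²(Y, μ_{F,x})] dP_X(x) ≥ V_F` by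
minimality of `μ_F`, which gives the reverse inequality.
-/

lemma ProbabilityTheory.IndepFun.map_prodMk_eq_compProd_const {Ω α β : Type*}
    [MeasurableSpace Ω] [MeasurableSpace α] [MeasurableSpace β] {μ : Measure Ω}
    [IsFiniteMeasure μ] {X : Ω → α} {Y : Ω → β} (hXY : IndepFun X Y μ)
    (hX : Measurable X) (hY : Measurable Y) :
    μ.map (fun ω => (X ω, Y ω)) = (μ.map X) ⊗ₘ Kernel.const α (μ.map Y) := by
  rw [Measure.compProd_const]
  exact (indepFun_iff_map_prod_eq_prod_map_map hX.aemeasurable hY.aemeasurable).mp hXY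

section FrechetMean

variable {α β : Type*} [MeasurableSpace α] [MetricSpace β] [MeasurableSpace β] [BorelSpace β]
  [SecondCountableTopology β]

lemma integrable_dist_sq_of_isBounded (hb : IsBounded (Set.univ : Set β)) {ν : Measure α}
    [IsFiniteMeasure ν] {f g : α → β} (hf : Measurable f) (hg : Measurable g) :
    Integrable (fun a => dist (f a) (g a) ^ 2) ν := by
  refine .of_bound ((hf.dist hg).pow_const 2).aestronglyMeasurable
    (Metric.diam (Set.univ : Set β) ^ 2) (ae_of_all _ fun a => ?_)
  rw [Real.norm_of_nonneg (by positivity)]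
  gcongr
  exact Metric.dist_le_diam_of_mem hb trivial trivial

lemma integrable_integral_dist_sq_kernel (hb : IsBounded (Set.univ : Set β)) {ν : Measure α}
    [IsFiniteMeasure ν] (κ : Kernel α β) [IsFiniteKernel κ] {f : α → β} (hf : Measurable f) :
    Integrable (fun x => ∫ y, dist y (f x) ^ 2 ∂κ x) ν := by
  have h := integrable_dist_sq_of_isBounded (ν := ν ⊗ₘ κ) (f := fun p => p.2)
    (g := fun p => f p.1) hb measurable_snd (hf.comp measurable_fst)
  rw [Measure.integrable_compProd_iff h.aestronglyMeasurable] at h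
  simpa only [Real.norm_of_nonneg (sq_nonneg _)] using h.2

variable {Ω : Type*} [MeasurableSpace Ω] {μ : Measure Ω} {X : Ω → α} {Y : Ω → β}

lemma integral_dist_sq_comp_eq_integral_kernel (hb : IsBounded (Set.univ : Set β))
    [IsFiniteMeasure μ] (hX : Measurable X) (hY : Measurable Y) (κ : Kernel α β) [IsFiniteKernel κ]
    (hκ : μ.map (fun ω => (X ω, Y ω)) = (μ.map X) ⊗ₘ κ) {f : α → β} (hf : Measurable f) :
    ∫ ω, dist (Y ω) (f (X ω)) ^ 2 ∂μ = ∫ x, ∫ y, dist y (f x) ^ 2 ∂κ x ∂μ.map X := by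
  have hφ : Measurable fun p : α × β => dist p.2 (f p.1) ^ 2 :=
    (measurable_snd.dist (hf.comp measurable_fst)).pow_const 2
  rw [← Measure.integral_compProd (f := fun p : α × β => dist p.2 (f p.1) ^ 2)
    (integrable_dist_sq_of_isBounded hb measurable_snd (hf.comp measurable_fst)), ← hκ,
    integral_map (hX.prodMk hY).aemeasurable hφ.aestronglyMeasurable]

lemma integral_integral_dist_sq_le {ν : Measure α} [IsFiniteMeasure ν] {κ : Kernel α β}
    [IsFiniteKernel κ] (hb : IsBounded (Set.univ : Set β)) {m : α → β} (hm : Measurable m)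
    (hmin : ∀ᵐ x ∂ν, ∀ z, ∫ y, dist y (m x) ^ 2 ∂κ x ≤ ∫ y, dist y z ^ 2 ∂κ x) (c : β) :
    ∫ x, ∫ y, dist y (m x) ^ 2 ∂κ x ∂ν ≤ ∫ x, ∫ y, dist y c ^ 2 ∂κ x ∂ν :=
  integral_mono_ae (integrable_integral_dist_sq_kernel hb κ hm)
    (integrable_integral_dist_sq_kernel hb κ measurable_const) (hmin.mono fun _ hx => hx c)

lemma integral_integral_dist_sq_eq_iff {ν : Measure α} [IsFiniteMeasure ν] {κ : Kernel α β}
    [IsFiniteKernel κ] (hb : IsBounded (Set.univ : Set β)) {m : α → β} (hm : Measurable m)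
    (hmin : ∀ᵐ x ∂ν, ∀ z, ∫ y, dist y (m x) ^ 2 ∂κ x ≤ ∫ y, dist y z ^ 2 ∂κ x)
    (huniq : ∀ᵐ x ∂ν, ∀ z, ∫ y, dist y z ^ 2 ∂κ x ≤ ∫ y, dist y (m x) ^ 2 ∂κ x → z = m x)
    (c : β) :
    ∫ x, ∫ y, dist y (m x) ^ 2 ∂κ x ∂ν = ∫ x, ∫ y, dist y c ^ 2 ∂κ x ∂ν ↔ ∀ᵐ x ∂ν, m x = c := by
  rw [integral_eq_iff_of_ae_le (integrable_integral_dist_sq_kernel hb κ hm)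
    (integrable_integral_dist_sq_kernel hb κ measurable_const) (hmin.mono fun _ hx => hx c)]
  constructor
  · intro h
    filter_upwards [h, huniq] with x hx hx_uniq
    exact (hx_uniq c hx.ge).symm
  · intro h
    filter_upwards [h] with x hx
    rw [hx]

lemma integral_dist_sq_le_integral_dist_sq_comp_of_indepFun [IsProbabilityMeasure μ]
    (hb : IsBounded (Set.univ : Set β)) (hX : Measurable X) (hY : Measurable Y)
    (hXY : IndepFun X Y μ) {c : β}
    (hc : ∀ z, ∫ ω, dist (Y ω) c ^ 2 ∂μ ≤ ∫ ω, dist (Y ω) z ^ 2 ∂μ) {f : α → β}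
    (hf : Measurable f) :
    ∫ ω, dist (Y ω) c ^ 2 ∂μ ≤ ∫ ω, dist (Y ω) (f (X ω)) ^ 2 ∂μ := by
  have : IsProbabilityMeasure (μ.map X) := Measure.isProbabilityMeasure_map hX.aemeasurable
  rw [integral_dist_sq_comp_eq_integral_kernel hb hX hY _
    (hXY.map_prodMk_eq_compProd_const hX hY) hf]
  calc ∫ ω, dist (Y ω) c ^ 2 ∂μ = ∫ _, ∫ ω, dist (Y ω) c ^ 2 ∂μ ∂μ.map X := by simp
    _ ≤ ∫ x, ∫ y, dist y (f x) ^ 2 ∂Kernel.const α (μ.map Y) x ∂μ.map X := by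
      refine integral_mono (integrable_const _) (integrable_integral_dist_sq_kernel hb _ hf)
        fun x => ?_
      rw [Kernel.const_apply, integral_map hY.aemeasurable
        (by fun_prop : Measurable fun y => dist y (f x) ^ 2).aestronglyMeasurable]
      exact hc (f x)

end FrechetMean

theorem frechet_correlation_coefficient_eq_zero_iff_general
    {Ω 𝓧 𝓨 : Type*} [MeasurableSpace Ω]
    [MeasurableSpace 𝓧]
    [MetricSpace 𝓨] [TopologicalSpace.SeparableSpace 𝓨]
    [MeasurableSpace 𝓨] [BorelSpace 𝓨]
    (hbY : IsBounded (Set.univ : Set 𝓨))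
    (μ : Measure Ω) [IsProbabilityMeasure μ]
    (X : Ω → 𝓧) (Y : Ω → 𝓨) (hX : Measurable X) (hY : Measurable Y)
    -- `κ` is a regular conditional distribution of `Y` given `X`:
    (κ : Kernel 𝓧 𝓨) [IsMarkovKernel κ]
    (hκ : Measure.map (fun ω => (X ω, Y ω)) μ = (Measure.map X μ).compProd κ)
    -- the global Fréchet mean exists and is unique:
    (μF : 𝓨)
    (hμF_min : ∀ z : 𝓨, (∫ ω, dist (Y ω) μF ^ 2 ∂μ) ≤ ∫ ω, dist (Y ω) z ^ 2 ∂μ)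
    -- the conditional Fréchet mean exists, is unique `P_X`-a.e., and is measurable in `x`:
    (μFx : 𝓧 → 𝓨) (hμFx_meas : Measurable μFx)
    (hμFx_min : ∀ᵐ x ∂(Measure.map X μ), ∀ z : 𝓨,
      (∫ y, dist y (μFx x) ^ 2 ∂(κ x)) ≤ ∫ y, dist y z ^ 2 ∂(κ x))
    (hμFx_uniq : ∀ᵐ x ∂(Measure.map X μ), ∀ z : 𝓨,
      ((∫ y, dist y z ^ 2 ∂(κ x)) ≤ ∫ y, dist y (μFx x) ^ 2 ∂(κ x)) → z = μFx x)
    -- the Fréchet variance, assumed strictly positive: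
    (VF : ℝ) (hVF : VF = ∫ ω, dist (Y ω) μF ^ 2 ∂μ) (hVF_pos : 0 < VF)
    -- the conditional Fréchet variance:
    (V : 𝓧 → ℝ) (hV : ∀ x, V x = ∫ y, dist y (μFx x) ^ 2 ∂(κ x))
    -- the Fréchet correlation coefficient:
    (ρ : ℝ) (hρ : ρ = 1 - (∫ x, V x ∂(Measure.map X μ)) / VF) :
    (ρ = 0 ↔ ∀ᵐ ω ∂μ, μFx (X ω) = μF) ∧
    (IndepFun X Y μ → ρ = 0) := by
  have : SecondCountableTopology 𝓨 := UniformSpace.secondCountable_of_separable 𝓨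
  have : IsProbabilityMeasure (μ.map X) := Measure.isProbabilityMeasure_map hX.aemeasurable
  have hVF_eq : VF = ∫ x, ∫ y, dist y μF ^ 2 ∂κ x ∂μ.map X :=
    hVF.trans (integral_dist_sq_comp_eq_integral_kernel hbY hX hY κ hκ measurable_const)
  have hV_eq : ∫ x, V x ∂μ.map X = ∫ x, ∫ y, dist y (μFx x) ^ 2 ∂κ x ∂μ.map X := by
    simp_rw [hV]
  have hρ_eq : ρ = 0 ↔ ∫ x, V x ∂μ.map X = VF := by
    rw [hρ, sub_eq_zero, eq_comm, div_eq_one_iff_eq hVF_pos.ne']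
  refine ⟨?_, fun hXY => hρ_eq.mpr (le_antisymm ?_ ?_)⟩
  · rw [hρ_eq, hV_eq, hVF_eq, integral_integral_dist_sq_eq_iff hbY hμFx_meas hμFx_min hμFx_uniq]
    exact ae_map_iff hX.aemeasurable (hμFx_meas (measurableSet_singleton μF))
  · rw [hV_eq, hVF_eq]
    exact integral_integral_dist_sq_le hbY hμFx_meas hμFx_min μF
  · rw [hV_eq, hVF, ← integral_dist_sq_comp_eq_integral_kernel hbY hX hY κ hκ hμFx_meas]
    exact integral_dist_sq_le_integral_dist_sq_comp_of_indepFun hbY hX hY hXY hμF_min hμFx_meas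

/-- Theorem 2 of the paper.
`ρ = 0` if and only if `μFx (X) = μF` almost surely; in particular, if `X` and `Y` are
independent then `ρ = 0`. -/
theorem frechet_correlation_coefficient_eq_zero_iff
    {Ω 𝓧 𝓨 : Type*} [MeasurableSpace Ω]
    [MetricSpace 𝓧] [CompleteSpace 𝓧] [TopologicalSpace.SeparableSpace 𝓧]
    [MeasurableSpace 𝓧] [BorelSpace 𝓧]
    [MetricSpace 𝓨] [CompleteSpace 𝓨] [TopologicalSpace.SeparableSpace 𝓨]
    [MeasurableSpace 𝓨] [BorelSpace 𝓨]
    (hbX : IsBounded (Set.univ : Set 𝓧)) (hbY : IsBounded (Set.univ : Set 𝓨))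
    (μ : Measure Ω) [IsProbabilityMeasure μ]
    (X : Ω → 𝓧) (Y : Ω → 𝓨) (hX : Measurable X) (hY : Measurable Y)
    -- `κ` is a regular conditional distribution of `Y` given `X`:
    (κ : Kernel 𝓧 𝓨) [IsMarkovKernel κ]
    (hκ : Measure.map (fun ω => (X ω, Y ω)) μ = (Measure.map X μ).compProd κ)
    -- the global Fréchet mean exists and is unique:
    (μF : 𝓨)
    (hμF_min : ∀ z : 𝓨, (∫ ω, dist (Y ω) μF ^ 2 ∂μ) ≤ ∫ ω, dist (Y ω) z ^ 2 ∂μ)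
    (hμF_uniq : ∀ z : 𝓨, ((∫ ω, dist (Y ω) z ^ 2 ∂μ) ≤ ∫ ω, dist (Y ω) μF ^ 2 ∂μ) → z = μF)
    -- the conditional Fréchet mean exists, is unique `P_X`-a.e., and is measurable in `x`:
    (μFx : 𝓧 → 𝓨) (hμFx_meas : Measurable μFx)
    (hμFx_min : ∀ᵐ x ∂(Measure.map X μ), ∀ z : 𝓨,
      (∫ y, dist y (μFx x) ^ 2 ∂(κ x)) ≤ ∫ y, dist y z ^ 2 ∂(κ x))
    (hμFx_uniq : ∀ᵐ x ∂(Measure.map X μ), ∀ z : 𝓨,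
      ((∫ y, dist y z ^ 2 ∂(κ x)) ≤ ∫ y, dist y (μFx x) ^ 2 ∂(κ x)) → z = μFx x)
    -- the Fréchet variance, assumed strictly positive:
    (VF : ℝ) (hVF : VF = ∫ ω, dist (Y ω) μF ^ 2 ∂μ) (hVF_pos : 0 < VF)
    -- the conditional Fréchet variance:
    (V : 𝓧 → ℝ) (hV : ∀ x, V x = ∫ y, dist y (μFx x) ^ 2 ∂(κ x))
    -- the Fréchet correlation coefficient:
    (ρ : ℝ) (hρ : ρ = 1 - (∫ x, V x ∂(Measure.map X μ)) / VF) :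
    (ρ = 0 ↔ ∀ᵐ ω ∂μ, μFx (X ω) = μF) ∧
    (IndepFun X Y μ → ρ = 0) :=
  frechet_correlation_coefficient_eq_zero_iff_general hbY μ X Y hX hY κ hκ μF hμF_min μFx hμFx_meas
    hμFx_min hμFx_uniq VF hVF hVF_pos V hV ρ hρ
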